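/- arXiv:1712.00299 — 2 statements merged into one kernel-verified Lean document; each statement's English description precedes it below -/
import Mathlib

section
/- For n pairwise non-parallel lines s_1,...,s_n through the origin in ℝ² (n ≥ 3), the total turning t(s_1,...,s_n) = Σ_{i=1}^{n-1} ∠(s_i,s_{i+1}) + ∠(s_n,s_1) is a positive integer multiple of π, and lies in {π, 2π, ..., (n-1)π}. -/
/-! Writing `θᵢ` for the direction of `sᵢ`, the angle `∠(sᵢ, sᵢ₊₁)` is `θᵢ₊₁ - θᵢ`, plus `π`
exactly when `θᵢ₊₁ ≤ θᵢ` (a descent). The differences telescope around the cycle, so the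
turning is `π` times the number of descents. A maximum of `θ` is followed by a descent and,
the `θᵢ` being distinct, a minimum is followed by an ascent; hence `1 ≤ k ≤ n - 1`. -/

/-- The cyclically next index in `Fin n`. -/
def nxt {n : ℕ} (i : Fin n) : Fin n := ⟨((i : ℕ) + 1) % n, Nat.mod_lt _ i.pos⟩

/-- A line through the origin is represented by its direction angle in `[0, π)`.
For two non-parallel lines with angles `a ≠ b`, `lineAngle a b ∈ (0, π)` is the unique
angle such that rotating the first line counterclockwise by it yields the second. -/
noncomputable def lineAngle (a b : ℝ) : ℝ := if a < b then b - a else b - a + Real.pi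

/-- The total turning `t(s₁,…,sₙ) = Σ_{i=1}^{n-1} ∠(sᵢ,s_{i+1}) + ∠(sₙ,s₁)`. -/
noncomputable def turning {n : ℕ} (θ : Fin n → ℝ) : ℝ :=
  ∑ i : Fin n, lineAngle (θ i) (θ (nxt i))

open Finset

lemma nxt_eq_add_one {n : ℕ} [NeZero n] (i : Fin n) : nxt i = i + 1 :=
  Fin.ext (by simp [nxt, Fin.val_add, Nat.add_mod])

lemma nxt_ne_self {n : ℕ} (hn : 2 ≤ n) (i : Fin n) : nxt i ≠ i := by
  have : NeZero n := ⟨by omega⟩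
  rw [nxt_eq_add_one, Ne, add_eq_left]
  exact Fin.ext_iff.not.mpr (by simp [Nat.mod_eq_of_lt hn])

lemma sum_comp_nxt {M : Type*} [AddCommMonoid M] {n : ℕ} [NeZero n] (f : Fin n → M) :
    ∑ i, f (nxt i) = ∑ i, f i := by
  simp_rw [nxt_eq_add_one]
  exact Equiv.sum_comp (Equiv.addRight 1) f

lemma lineAngle_eq (a b : ℝ) : lineAngle a b = b - a + if b ≤ a then Real.pi else 0 := by
  rcases lt_or_ge a b with h | h
  · simp [lineAngle, h, h.not_ge]
  · simp [lineAngle, h, h.not_gt]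

noncomputable def descents {n : ℕ} (θ : Fin n → ℝ) : Finset (Fin n) := {i | θ (nxt i) ≤ θ i}

lemma turning_eq_card_descents_mul_pi {n : ℕ} [NeZero n] (θ : Fin n → ℝ) :
    turning θ = #(descents θ) * Real.pi := by
  have telescope : ∑ i, (θ (nxt i) - θ i) = 0 := by
    rw [sum_sub_distrib, sum_comp_nxt, sub_self]
  simp only [turning, lineAngle_eq, sum_add_distrib, telescope, zero_add, sum_ite,
    sum_const_zero, add_zero, sum_const, nsmul_eq_mul, descents]

lemma descents_nonempty {n : ℕ} [NeZero n] (θ : Fin n → ℝ) : (descents θ).Nonempty := by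
  obtain ⟨j, -, hj⟩ := exists_max_image univ θ univ_nonempty
  exact ⟨j, by simpa [descents] using hj (nxt j) (mem_univ _)⟩

lemma card_descents_lt {n : ℕ} (hn : 2 ≤ n) {θ : Fin n → ℝ} (hθ : Function.Injective θ) :
    #(descents θ) < n := by
  have : NeZero n := ⟨by omega⟩
  obtain ⟨j, -, hj⟩ := exists_min_image univ θ univ_nonempty
  have hlt : θ j < θ (nxt j) := (hj _ (mem_univ _)).lt_of_ne (hθ.ne (nxt_ne_self hn j).symm)
  simpa using card_lt_univ_of_notMem (s := descents θ) (by simpa [descents] using hlt)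

theorem turning_mem_general (n : ℕ) (hn : 3 ≤ n) (θ : Fin n → ℝ)
    (hinj : Function.Injective θ) :
    ∃ k : ℕ, 1 ≤ k ∧ k ≤ n - 1 ∧ turning θ = k * Real.pi := by
  have : NeZero n := ⟨by omega⟩
  refine ⟨#(descents θ), (descents_nonempty θ).card_pos, ?_, turning_eq_card_descents_mul_pi θ⟩
  have := card_descents_lt (by omega) hinj
  omega

/-- for `n ≥ 3` pairwise non-parallel lines through the origin,
the total turning is `kπ` for some integer `k` with `1 ≤ k ≤ n-1`. -/
theorem turning_mem (n : ℕ) (hn : 3 ≤ n) (θ : Fin n → ℝ)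
    (hθ : ∀ i, θ i ∈ Set.Ico 0 Real.pi) (hinj : Function.Injective θ) :
    ∃ k : ℕ, 1 ≤ k ∧ k ≤ n - 1 ∧ turning θ = k * Real.pi :=
  turning_mem_general n hn θ hinj
end

section
/- Additivity of the total turning: for n ≥ 4 pairwise non-parallel lines s_1,...,s_n through the origin, t(s_1,...,s_n) = t(s_1,...,s_{n-1}) + t(s_1,s_{n-1},s_n) - π. -/
theorem nxt_castSucc {n : ℕ} (i : Fin n) : nxt i.castSucc = i.succ :=
  Fin.ext (Nat.mod_eq_of_lt (by simp))

theorem nxt_last (n : ℕ) : nxt (Fin.last n) = 0 :=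
  Fin.ext (Nat.mod_self _)

theorem turning_succ {n : ℕ} (θ : Fin (n + 1) → ℝ) :
    turning θ =
      ∑ i : Fin n, lineAngle (θ i.castSucc) (θ i.succ) + lineAngle (θ (Fin.last n)) (θ 0) := by
  simp only [turning, Fin.sum_univ_castSucc, nxt_castSucc, nxt_last]

theorem turning_three (a b c : ℝ) :
    turning ![a, b, c] = lineAngle a b + lineAngle b c + lineAngle c a := by
  simp [turning_succ, Fin.sum_univ_two]

theorem lineAngle_add_lineAngle_swap {a b : ℝ} (h : a ≠ b) :
    lineAngle a b + lineAngle b a = Real.pi := by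
  unfold lineAngle
  rcases h.lt_or_gt with h | h
  · rw [if_pos h, if_neg h.not_gt]; ring
  · rw [if_neg h.not_gt, if_pos h]; ring

theorem turning_add_lineAngle_last_zero {k : ℕ} (θ : Fin (k + 2) → ℝ) :
    turning θ + lineAngle (θ (Fin.last k).castSucc) (θ 0) =
      turning (θ ∘ Fin.castSucc) + lineAngle (θ (Fin.last k).castSucc) (θ (Fin.last (k + 1))) +
        lineAngle (θ (Fin.last (k + 1))) (θ 0) := by
  simp only [turning_succ, Fin.sum_univ_castSucc, Function.comp_apply, Fin.succ_last,
    Fin.succ_castSucc, Fin.castSucc_zero]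
  ring

/-- additivity of the total turning. For `n = m+1 ≥ 4` pairwise
non-parallel lines, `t(s₁,…,sₙ) = t(s₁,…,s_{n-1}) + t(s₁,s_{n-1},sₙ) - π`. -/
theorem turning_additive (m : ℕ) (hm : 3 ≤ m) (θ : Fin (m + 1) → ℝ)
    (hinj : Function.Injective θ) :
    turning θ =
      turning (θ ∘ Fin.castSucc) +
        turning ![θ 0, θ ⟨m - 1, by omega⟩, θ ⟨m, by omega⟩] - Real.pi := by
  obtain ⟨k, rfl⟩ : ∃ k, m = k + 1 := ⟨m - 1, by omega⟩
  have hprev : (⟨k + 1 - 1, by omega⟩ : Fin (k + 2)) = (Fin.last k).castSucc :=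
    Fin.ext (by simp)
  have hne : θ 0 ≠ θ (Fin.last k).castSucc :=
    hinj.ne (Fin.ne_of_val_ne (by simpa using (by omega : 0 ≠ k)))
  have hlast : (⟨k + 1, by omega⟩ : Fin (k + 2)) = Fin.last (k + 1) := rfl
  rw [hprev, hlast, turning_three]
  linarith [turning_add_lineAngle_last_zero θ, lineAngle_add_lineAngle_swap hne]
end
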